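/- If an ultrafilter U on ω admits an infinite strictly decreasing <_∞-sequence U = U₀ >_∞ U₁ >_∞ U₂ >_∞ ⋯ below it, then there is a function h : ω → ω₁ such that the order type of h''X is at least ω^ω for every X ∈ U. -/

import Mathlib

open Ordinal Set

/-- The order type of a set of ordinals: the unique ordinal order-isomorphic to it. -/
noncomputable def otype (S : Set Ordinal.{0}) : Ordinal.{1} :=
  @Ordinal.type S (Subrel (· < ·) S) (by exact (inferInstance : IsWellOrder _ (Subrel (· < ·) (· ∈ S))))

instance (S : Set Ordinal.{0}) : IsWellOrder S (Subrel (· < ·) S) :=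
  (inferInstance : IsWellOrder _ (Subrel (· < ·) (· ∈ S)))

instance (S : Set Ordinal.{0}) : IsWellOrder (Subtype S) (Subrel (· < ·) S) :=
  (inferInstance : IsWellOrder _ (Subrel (· < ·) (· ∈ S)))

/-- `f` is finite-to-one on `X`. -/
def FinToOneOn (f : ℕ → ℕ) (X : Set ℕ) : Prop := ∀ n : ℕ, (X ∩ f ⁻¹' {n}).Finite

/-- `f` is constant on `X`. -/
def ConstOn (f : ℕ → ℕ) (X : Set ℕ) : Prop := ∃ c : ℕ, ∀ x ∈ X, f x = c

/-- `V >_∞ U`: some `f` pushes `V` forward to `U` but `f` is neither finite-to-one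
nor constant on any member of `V`. -/
def InfGT (V U : Ultrafilter ℕ) : Prop :=
  ∃ f : ℕ → ℕ, Ultrafilter.map f V = U ∧ ∀ X ∈ V, ¬ FinToOneOn f X ∧ ¬ ConstOn f X

open scoped Classical

noncomputable section

namespace Stmt5Aux

variable (f : ℕ → ℕ → ℕ)

/-- thread values: `W f j (j₀, n)` is the value at level `j` of the thread started
at level `j₀` with value `n`. -/
def W : ℕ → ℕ × ℕ → ℕ
  | 0 => fun p => p.2
  | (j+1) => fun p =>
      if j + 1 ≤ p.1 then p.2
      else if (W j p = 0 ∨ ∃ q : ℕ × ℕ, q.1 ≤ j ∧ q.2 ≤ j ∧ W j q = W j p) then 0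
      else f j (W j p)

/-- the modified function at level `j`. -/
def fp (j : ℕ) (x : ℕ) : ℕ :=
  if (x = 0 ∨ ∃ q : ℕ × ℕ, q.1 ≤ j ∧ q.2 ≤ j ∧ W f j q = x) then 0 else f j x

lemma W_zero (p : ℕ × ℕ) : W f 0 p = p.2 := rfl

lemma W_of_le {j : ℕ} {p : ℕ × ℕ} (h : j ≤ p.1) : W f j p = p.2 := by
  induction j with
  | zero => rfl
  | succ j ih =>
    rw [W]; dsimp only; rw [if_pos h]

lemma W_succ {j : ℕ} {p : ℕ × ℕ} (h : p.1 ≤ j) : W f (j+1) p = fp f j (W f j p) := by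
  rw [W]; dsimp only; rw [if_neg (by omega), fp]

lemma fp_zero (j : ℕ) : fp f j 0 = 0 := by rw [fp, if_pos (Or.inl rfl)]

lemma W_death {p : ℕ × ℕ} {j : ℕ} (h : max p.1 p.2 < j) : W f j p = 0 := by
  -- first show it at level max+1, then propagate
  obtain ⟨d, rfl⟩ : ∃ d, j = (max p.1 p.2 + 1) + d := ⟨j - (max p.1 p.2 + 1), by omega⟩
  induction d with
  | zero =>
    rw [Nat.add_zero, W_succ f (le_max_left _ _), fp,
      if_pos (Or.inr ⟨p, le_max_left _ _, le_max_right _ _, rfl⟩)]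
  | succ d ih =>
    have : (max p.1 p.2 + 1) + (d+1) = ((max p.1 p.2 + 1) + d) + 1 := by omega
    rw [this, W_succ f (by omega), ih (by omega), fp_zero]

/-- threads started at the image agree with continued threads -/
lemma W_shift (j n i : ℕ) : W f (j+1+i) (j+1, fp f j n) = W f (j+1+i) (j, n) := by
  induction i with
  | zero =>
    have h1 : W f (j+1) (j+1, fp f j n) = fp f j n := W_of_le f (le_refl _)
    have h2 : W f (j+1) (j, n) = fp f j (W f j (j, n)) := W_succ f (le_refl _)
    have h3 : W f j (j, n) = n := W_of_le f (le_refl _)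
    rw [Nat.add_zero, h1, h2, h3]
  | succ i ih =>
    have e : j+1+(i+1) = (j+1+i)+1 := by omega
    rw [e, W_succ f (show (j+1,fp f j n).1 ≤ j+1+i by simp), W_succ f (show (j,n).1 ≤ j+1+i by simp; omega), ih]



/-- CNF-style sum `ω^(L-1)·a(L-1) + ⋯ + ω·a 1 + a 0`. -/
def rho (a : ℕ → ℕ) : ℕ → Ordinal.{0}
  | 0 => 0
  | (L+1) => ω ^ (L : Ordinal.{0}) * (a L : Ordinal.{0}) + rho a L

lemma rho_lt (a : ℕ → ℕ) (L : ℕ) : rho a L < ω ^ (L : Ordinal.{0}) := by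
  induction L with
  | zero => simp [rho]
  | succ L ih =>
    rw [rho]
    calc ω ^ (L : Ordinal.{0}) * (a L : Ordinal) + rho a L
        < ω ^ (L : Ordinal.{0}) * (a L : Ordinal) + ω ^ (L : Ordinal.{0}) :=
          add_lt_add_right ih _
      _ = ω ^ (L : Ordinal.{0}) * ((a L : Ordinal) + 1) := by rw [mul_add_one]
      _ ≤ ω ^ (L : Ordinal.{0}) * ω := by
          apply mul_le_mul_right
          have : ((a L : Ordinal) + 1) = ((a L + 1 : ℕ) : Ordinal) := by push_cast; ring
          rw [this]
          exact (nat_lt_omega0 _).le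
      _ = ω ^ ((L : Ordinal.{0}) + 1) := by rw [← opow_succ]; rfl
      _ = ω ^ (((L+1) : ℕ) : Ordinal.{0}) := by push_cast; ring_nf

lemma rho_congr {a b : ℕ → ℕ} {L : ℕ} (h : ∀ i < L, a i = b i) : rho a L = rho b L := by
  induction L with
  | zero => rfl
  | succ L ih =>
    rw [rho, rho, h L (by omega), ih (fun i hi => h i (by omega))]

lemma rho_stable {a : ℕ → ℕ} {L M : ℕ} (hLM : L ≤ M) (h : ∀ i, L ≤ i → a i = 0) :
    rho a M = rho a L := by
  obtain ⟨d, rfl⟩ : ∃ d, M = L + d := ⟨M - L, by omega⟩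
  induction d with
  | zero => rfl
  | succ d ih =>
    have : L + (d+1) = (L + d) + 1 := by omega
    rw [this, rho, h (L+d) (by omega), ih (by omega)]
    simp

lemma rho_lt_rho {a b : ℕ → ℕ} {i L : ℕ} (hiL : i < L) (hdig : a i < b i)
    (hagree : ∀ k, i < k → a k = b k) : rho a L < rho b L := by
  obtain ⟨d, rfl⟩ : ∃ d, L = (i+1) + d := ⟨L - (i+1), by omega⟩
  clear hiL
  induction d with
  | zero =>
    rw [Nat.add_zero, rho, rho]
    calc ω ^ (i : Ordinal.{0}) * (a i : Ordinal) + rho a i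
        < ω ^ (i : Ordinal.{0}) * (a i : Ordinal) + ω ^ (i : Ordinal.{0}) :=
          add_lt_add_right (rho_lt a i) _
      _ = ω ^ (i : Ordinal.{0}) * ((a i : Ordinal) + 1) := by rw [mul_add_one]
      _ ≤ ω ^ (i : Ordinal.{0}) * (b i : Ordinal) := by
          apply mul_le_mul_right
          have : ((a i : Ordinal) + 1) = ((a i + 1 : ℕ) : Ordinal) := by push_cast; ring
          rw [this]
          exact_mod_cast Nat.cast_le.2 hdig
      _ ≤ ω ^ (i : Ordinal.{0}) * (b i : Ordinal) + rho b i := le_self_add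
  | succ d ih =>
    have e : (i+1) + (d+1) = ((i+1) + d) + 1 := by omega
    rw [e, rho, rho, hagree (i+1+d) (by omega)]
    exact add_lt_add_right ih _

/-- extract the top difference from two eventually-zero sequences -/
lemma exists_top_diff {a b : ℕ → ℕ} {La Lb : ℕ} (ha : ∀ i, La ≤ i → a i = 0)
    (hb : ∀ i, Lb ≤ i → b i = 0) (hab : ∃ i, a i ≠ b i) :
    ∃ i, a i ≠ b i ∧ ∀ k, i < k → a k = b k := by
  classical
  set M := max La Lb with hM
  obtain ⟨i0, hi0⟩ := hab
  have hi0M : i0 ≤ M := by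
    by_contra h
    exact hi0 (by rw [ha i0 (by omega), hb i0 (by omega)])
  refine ⟨Nat.findGreatest (fun i => a i ≠ b i) M,
    Nat.findGreatest_spec (P := fun i => a i ≠ b i) hi0M hi0, ?_⟩
  intro k hk
  by_contra hne
  rcases le_or_gt k M with h | h
  · exact (Nat.findGreatest_is_greatest hk h) hne
  · exact hne (by rw [ha k (by omega), hb k (by omega)])

/-- an order criterion: if `rho a La < rho b Lb` (with the given death bounds) then the
top difference digit of `a` is smaller. -/
lemma top_diff_of_rho_lt {a b : ℕ → ℕ} {La Lb : ℕ} (ha : ∀ i, La ≤ i → a i = 0)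
    (hb : ∀ i, Lb ≤ i → b i = 0) (hlt : rho a La < rho b Lb) :
    ∃ i, a i < b i ∧ ∀ k, i < k → a k = b k := by
  set M := max La Lb with hM
  have hsa : rho a M = rho a La := rho_stable (le_max_left _ _) ha
  have hsb : rho b M = rho b Lb := rho_stable (le_max_right _ _) hb
  have hlt' : rho a M < rho b M := by rw [hsa, hsb]; exact hlt
  have hab : ∃ i, a i ≠ b i := by
    by_contra h
    push_neg at h
    rw [rho_congr (fun i _ => h i)] at hlt'
    exact lt_irrefl _ hlt'
  obtain ⟨i, hne, hag⟩ := exists_top_diff ha hb hab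
  have hiM : i < M := by
    by_contra h
    exact hne (by rw [ha i (by omega), hb i (by omega)])
  rcases Nat.lt_or_ge (a i) (b i) with h | h
  · exact ⟨i, h, hag⟩
  · have : b i < a i := by omega
    have := rho_lt_rho hiM this (fun k hk => (hag k hk).symm)
    exact absurd hlt' (not_lt_of_gt this)

lemma rho_lt_of_top_diff {a b : ℕ → ℕ} {La Lb i : ℕ} (ha : ∀ k, La ≤ k → a k = 0)
    (hb : ∀ k, Lb ≤ k → b k = 0) (hdig : a i < b i) (hag : ∀ k, i < k → a k = b k) :
    rho a La < rho b Lb := by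
  set M := max (max La Lb) (i+1) with hM
  have hsa : rho a M = rho a La := rho_stable (by omega) ha
  have hsb : rho b M = rho b Lb := rho_stable (by omega) hb
  rw [← hsa, ← hsb]
  exact rho_lt_rho (by omega) hdig hag


/-- the thread sequence of `n` at level `j` -/
def seq (j n : ℕ) (i : ℕ) : ℕ := W f (j + i) (j, n)

lemma seq_death (j n : ℕ) : ∀ i, n + 1 ≤ i → seq f j n i = 0 := by
  intro i hi
  exact W_death f (by simp; omega)

lemma seq_zero (j n : ℕ) : seq f j n 0 = n := W_of_le f (by simp)

lemma seq_shift (j n : ℕ) (i : ℕ) : seq f (j+1) (fp f j n) i = seq f j n (i+1) := by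
  have : j + (i+1) = j + 1 + i := by omega
  rw [seq, seq, this, W_shift]

/-- the ordinal labelling -/
def phi (j n : ℕ) : Ordinal.{0} := rho (seq f j n) (n + 1)

lemma phi_inj (j : ℕ) : Function.Injective (phi f j) := by
  intro n m h
  by_contra hnm
  have hd : seq f j n 0 ≠ seq f j m 0 := by rw [seq_zero, seq_zero]; exact hnm
  obtain ⟨i, hne, hag⟩ := exists_top_diff (seq_death f j n) (seq_death f j m) ⟨0, hd⟩
  rcases Nat.lt_or_ge (seq f j n i) (seq f j m i) with hlt | hge
  · exact absurd h (ne_of_lt (rho_lt_of_top_diff (seq_death f j n) (seq_death f j m) hlt hag))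
  · have hlt : seq f j m i < seq f j n i := by omega
    exact absurd h.symm
      (ne_of_lt (rho_lt_of_top_diff (seq_death f j m) (seq_death f j n) hlt
        (fun k hk => (hag k hk).symm)))

/-- the crucial interface: comparison of images lifts back -/
lemma phi_interface (j n m : ℕ) (h : phi f (j+1) (fp f j n) < phi f (j+1) (fp f j m)) :
    phi f j n < phi f j m := by
  obtain ⟨i, hdig, hag⟩ := top_diff_of_rho_lt (seq_death f (j+1) (fp f j n))
    (seq_death f (j+1) (fp f j m)) h
  rw [seq_shift, seq_shift] at hdig
  apply rho_lt_of_top_diff (seq_death f j n) (seq_death f j m) hdig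
  intro k hk
  obtain ⟨k, rfl⟩ : ∃ k', k = k' + 1 := ⟨k - 1, by omega⟩
  rw [← seq_shift, ← seq_shift]
  exact hag k (by omega)


/-- enumeration of an infinite set of ordinals by a strictly monotone sequence -/
lemma exists_strictMono_seq (A : Set Ordinal.{0}) (hA : A.Infinite) :
    ∃ e : ℕ → Ordinal.{0}, StrictMono e ∧ ∀ n, e n ∈ A := by
  let e : ℕ → Ordinal.{0} := fun n => Nat.rec (sInf A) (fun _ prev => sInf (A ∩ Set.Ioi prev)) n
  have he0 : e 0 = sInf A := rfl
  have heS : ∀ n, e (n+1) = sInf (A ∩ Set.Ioi (e n)) := fun n => rfl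
  have key : ∀ n, (e n ∈ A ∧ (A ∩ Set.Iic (e n)).Finite) := by
    intro n
    induction n with
    | zero =>
      refine ⟨he0 ▸ csInf_mem hA.nonempty, ?_⟩
      have hsub : A ∩ Set.Iic (e 0) ⊆ {e 0} := by
        rintro x ⟨hxA, hx⟩
        have : e 0 ≤ x := he0 ▸ csInf_le' hxA
        exact le_antisymm hx this
      exact (Set.finite_singleton _).subset hsub
    | succ n ih =>
      obtain ⟨hmem, hfin⟩ := ih
      have hne : (A ∩ Set.Ioi (e n)).Nonempty := by
        rcases Set.eq_empty_or_nonempty (A ∩ Set.Ioi (e n)) with h | h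
        · exfalso
          apply hA
          refine hfin.subset ?_
          intro x hx
          refine ⟨hx, ?_⟩
          by_contra hgt
          exact (Set.eq_empty_iff_forall_notMem.1 h x) ⟨hx, by simpa using hgt⟩
        · exact h
      have hmem' : e (n+1) ∈ A ∩ Set.Ioi (e n) := heS n ▸ csInf_mem hne
      refine ⟨hmem'.1, ?_⟩
      have hsub : A ∩ Set.Iic (e (n+1)) ⊆ (A ∩ Set.Iic (e n)) ∪ {e (n+1)} := by
        rintro x ⟨hxA, hx⟩
        rcases le_or_gt x (e n) with h | h
        · exact Or.inl ⟨hxA, h⟩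
        · right
          have : e (n+1) ≤ x := heS n ▸ csInf_le' ⟨hxA, h⟩
          exact le_antisymm hx this
      exact ((hfin.union (Set.finite_singleton _)).subset hsub)
  have hlt : ∀ n, e n < e (n+1) := by
    intro n
    have hne : (A ∩ Set.Ioi (e n)).Nonempty := by
      rcases Set.eq_empty_or_nonempty (A ∩ Set.Ioi (e n)) with h | h
      · exfalso
        apply hA
        refine (key n).2.subset ?_
        intro x hx
        refine ⟨hx, ?_⟩
        by_contra hgt
        exact (Set.eq_empty_iff_forall_notMem.1 h x) ⟨hx, by simpa using hgt⟩
      · exact h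
    have : e (n+1) ∈ A ∩ Set.Ioi (e n) := heS n ▸ csInf_mem hne
    exact this.2
  exact ⟨e, strictMono_nat_of_lt_succ hlt, fun n => (key n).1⟩

end Stmt5Aux


namespace Stmt5Aux

lemma otype_mono {A B : Set Ordinal.{0}} (h : A ⊆ B) : otype A ≤ otype B := by
  refine RelEmbedding.ordinal_type_le ⟨⟨fun x => ⟨x.1, h x.2⟩, ?_⟩, Iff.rfl⟩
  intro a b hab
  simpa [Subtype.ext_iff] using hab

lemma one_le_otype {A : Set Ordinal.{0}} (h : A.Nonempty) : 1 ≤ otype A := by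
  rw [Ordinal.one_le_iff_ne_zero]
  intro h0
  rw [otype, Ordinal.type_eq_zero_iff_isEmpty] at h0
  rcases h with ⟨x, hx⟩
  exact h0.elim' ⟨x, hx⟩

/-- The key step: blocks of infinite fibers over an ordered index set. -/
lemma step_lemma (A B : Set Ordinal.{0}) (p : Ordinal.{0} → Ordinal.{0})
    (hsep : ∀ x ∈ A, ∀ y ∈ A, p x < p y → x < y)
    (hfib : ∀ γ ∈ B, {x | x ∈ A ∧ p x = γ}.Infinite) :
    ω * otype B ≤ otype A := by
  choose e he1 he2 using fun (γ : B) => exists_strictMono_seq _ (hfib γ.1 γ.2)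
  have hmemA : ∀ (γ : B) (n : ℕ), e γ n ∈ A := fun γ n => (he2 γ n).1
  have hp : ∀ (γ : B) (n : ℕ), p (e γ n) = γ.1 := fun γ n => (he2 γ n).2
  haveI i0 : IsWellOrder (↑B) (Subrel (· < ·) B) := by exact inferInstance
  haveI i1 : IsWellOrder (ULift.{1} ℕ) (ULift.down.{1} ⁻¹'o ((· < ·) : ℕ → ℕ → Prop)) := by
    exact RelEmbedding.isWellOrder (RelIso.preimage Equiv.ulift _).toRelEmbedding
  haveI i2 : IsWellOrder (Subtype B × ULift.{1,0} ℕ)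
      (Prod.Lex (Subrel (· < ·) B) (ULift.down ⁻¹'o ((· < ·) : ℕ → ℕ → Prop))) := by
    exact inferInstance
  have emb : Prod.Lex (Subrel (· < ·) B) (ULift.down.{1} ⁻¹'o ((· < ·) : ℕ → ℕ → Prop)) ↪r
      Subrel ((· < ·) : Ordinal.{0} → Ordinal.{0} → Prop) A := by
    refine RelEmbedding.ofMonotone (fun q => ⟨e q.1 q.2.down, hmemA q.1 q.2.down⟩) ?_
    rintro ⟨γ, i⟩ ⟨γ', i'⟩ hlex
    have : Subrel (· < ·) B γ γ' ∨ (γ = γ' ∧ i.down < i'.down) := by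
      cases hlex with
      | left _ _ h => exact Or.inl h
      | right _ h => exact Or.inr ⟨rfl, h⟩
    rcases this with h | ⟨rfl, h⟩
    · have hpp : p (e γ i.down) < p (e γ' i'.down) := by
        rw [hp, hp]; exact h
      exact hsep _ (hmemA γ i.down) _ (hmemA γ' i'.down) hpp
    · exact he1 γ h
  have h1 : type (Prod.Lex (Subrel (· < ·) B) (ULift.down.{1} ⁻¹'o ((· < ·) : ℕ → ℕ → Prop)))
      ≤ otype A := emb.ordinal_type_le
  rw [type_prod_lex, type_uLift, type_nat_lt, lift_omega0] at h1
  exact h1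



lemma finite_not_mem {Vu : Ultrafilter ℕ} (hsing : ∀ x : ℕ, ({x} : Set ℕ) ∉ Vu)
    {A : Set ℕ} (hA : A.Finite) : A ∉ Vu := by
  intro h
  obtain ⟨x, -, rfl⟩ := Ultrafilter.eq_pure_of_finite_mem hA h
  exact hsing x (by simp)

lemma Dset_mem (V : ℕ → Ultrafilter ℕ) (F : ℕ → ℕ → ℕ)
    (hmap : ∀ j, Ultrafilter.map (F j) (V j) = V (j+1))
    (hnf : ∀ j X, X ∈ V j → ¬ FinToOneOn (F j) X)
    (hsing : ∀ j (x : ℕ), ({x} : Set ℕ) ∉ V j)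
    (j : ℕ) (X : Set ℕ) (hX : X ∈ V j) :
    {c : ℕ | (X ∩ (fp F j) ⁻¹' {c}).Infinite} ∈ V (j+1) := by
  by_contra hDc
  have hZ : {c | (X ∩ fp F j ⁻¹' {c}).Infinite}ᶜ ∈ V (j+1) :=
    Ultrafilter.compl_mem_iff_notMem.2 hDc
  have hMod : {x | fp F j x ≠ F j x}.Finite := by
    have hsub : {x | fp F j x ≠ F j x} ⊆ {0} ∪ (W F j) '' ((Set.Iic j) ×ˢ (Set.Iic j)) := by
      intro x hx
      rw [Set.mem_setOf_eq, fp] at hx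
      by_cases hc : (x = 0 ∨ ∃ q : ℕ × ℕ, q.1 ≤ j ∧ q.2 ≤ j ∧ W F j q = x)
      · rcases hc with rfl | ⟨q, h1, h2, h3⟩
        · exact Or.inl rfl
        · exact Or.inr ⟨q, ⟨h1, h2⟩, h3⟩
      · rw [if_neg hc] at hx; exact absurd rfl hx
    exact (((Set.finite_singleton 0).union
      (((Set.finite_Iic j).prod (Set.finite_Iic j)).image _))).subset hsub
  have hModc : {x | fp F j x ≠ F j x}ᶜ ∈ V j :=
    Ultrafilter.compl_mem_iff_notMem.2 (finite_not_mem (hsing j) hMod)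
  have hpre : (F j) ⁻¹' ({c | (X ∩ fp F j ⁻¹' {c}).Infinite}ᶜ) ∈ V j := by
    rw [← hmap j] at hZ
    exact Ultrafilter.mem_map.1 hZ
  set Y := (X ∩ (F j) ⁻¹' ({c | (X ∩ fp F j ⁻¹' {c}).Infinite}ᶜ)) ∩ {x | fp F j x ≠ F j x}ᶜ with hYdef
  have hY : Y ∈ V j := Filter.inter_mem (Filter.inter_mem hX hpre) hModc
  have hnfY := hnf j Y hY
  rw [FinToOneOn] at hnfY
  push_neg at hnfY
  obtain ⟨c, hc⟩ := hnfY
  have hcinf : (Y ∩ (F j) ⁻¹' {c}).Infinite := hc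
  have hsub2 : Y ∩ (F j) ⁻¹' {c} ⊆ X ∩ (fp F j) ⁻¹' {c} := by
    rintro y ⟨⟨⟨hyX, _⟩, hyM⟩, hyc⟩
    refine ⟨hyX, ?_⟩
    have heq : fp F j y = F j y := not_not.1 hyM
    simp only [Set.mem_preimage, Set.mem_singleton_iff] at hyc ⊢
    rw [heq]; exact hyc
  have hcD : (X ∩ (fp F j) ⁻¹' {c}).Infinite := hcinf.mono hsub2
  obtain ⟨y, hy⟩ := hcinf.nonempty
  have hyZ : F j y ∈ {c | (X ∩ fp F j ⁻¹' {c}).Infinite}ᶜ := hy.1.1.2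
  have hyc : F j y = c := hy.2
  rw [hyc] at hyZ
  exact hyZ hcD

lemma main_induction (V : ℕ → Ultrafilter ℕ) (F : ℕ → ℕ → ℕ)
    (hD : ∀ j X, X ∈ V j → {c : ℕ | (X ∩ (fp F j) ⁻¹' {c}).Infinite} ∈ V (j+1)) :
    ∀ (k j : ℕ) (X : Set ℕ), X ∈ V j →
      (ω : Ordinal.{1}) ^ ((k : ℕ) : Ordinal.{1}) ≤ otype ((phi F j) '' X) := by
  intro k
  induction k with
  | zero =>
    intro j X hX
    rw [Nat.cast_zero, opow_zero]
    exact one_le_otype ((Ultrafilter.nonempty_of_mem hX).image _)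
  | succ k ih =>
    intro j X hX
    set D := {c : ℕ | (X ∩ (fp F j) ⁻¹' {c}).Infinite} with hDdef
    have hDV := hD j X hX
    have hIH := ih (j+1) D hDV
    set p : Ordinal.{0} → Ordinal.{0} :=
      fun x => phi F (j+1) (fp F j (Function.invFun (phi F j) x)) with hpdef
    have hinv : ∀ n, Function.invFun (phi F j) (phi F j n) = n :=
      Function.leftInverse_invFun (phi_inj F j)
    have hsep : ∀ x ∈ (phi F j '' X), ∀ y ∈ (phi F j '' X), p x < p y → x < y := by
      rintro x ⟨n, _, rfl⟩ y ⟨m, _, rfl⟩ hpp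
      rw [hpdef] at hpp
      simp only at hpp
      rw [hinv, hinv] at hpp
      exact phi_interface F j n m hpp
    have hfib : ∀ γ ∈ (phi F (j+1) '' D), {x | x ∈ phi F j '' X ∧ p x = γ}.Infinite := by
      rintro γ ⟨c, hc, rfl⟩
      have hsub : phi F j '' (X ∩ (fp F j) ⁻¹' {c}) ⊆
          {x | x ∈ phi F j '' X ∧ p x = phi F (j+1) c} := by
        rintro x ⟨n, ⟨hnX, hnc⟩, rfl⟩
        refine ⟨⟨n, hnX, rfl⟩, ?_⟩
        rw [hpdef]
        simp only
        rw [hinv]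
        simp only [Set.mem_preimage, Set.mem_singleton_iff] at hnc
        rw [hnc]
      exact (hc.image (Set.injOn_of_injective (phi_inj F j) )).mono hsub
    have hstep := step_lemma (phi F j '' X) (phi F (j+1) '' D) p hsep hfib
    calc (ω : Ordinal.{1}) ^ (((k+1 : ℕ)) : Ordinal.{1})
        = ω ^ ((1 : Ordinal.{1}) + (k : Ordinal.{1})) := by
          congr 1
          rw [show (1:Ordinal.{1}) + (k : Ordinal.{1}) = ((1+k : ℕ) : Ordinal.{1}) from by push_cast; ring]
          congr 1
          omega
      _ = ω ^ (1 : Ordinal.{1}) * ω ^ ((k : ℕ) : Ordinal.{1}) := by rw [opow_add]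
      _ = ω * ω ^ ((k : ℕ) : Ordinal.{1}) := by rw [opow_one]
      _ ≤ ω * otype (phi F (j+1) '' D) := mul_le_mul_right hIH _
      _ ≤ otype (phi F j '' X) := hstep

lemma card_omega_pow (L : ℕ) : ((ω : Ordinal.{0}) ^ ((L : ℕ) : Ordinal.{0})).card ≤ Cardinal.aleph0 := by
  induction L with
  | zero => simp
  | succ L ih =>
    have : ((L+1 : ℕ) : Ordinal.{0}) = ((L : ℕ) : Ordinal.{0}) + 1 := by push_cast; ring
    rw [this, Ordinal.add_one_eq_succ, opow_succ, Ordinal.card_mul]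
    calc (ω ^ ((L:ℕ) : Ordinal.{0})).card * (ω : Ordinal.{0}).card
        ≤ Cardinal.aleph0 * Cardinal.aleph0 := by
          apply mul_le_mul' ih
          rw [Ordinal.card_omega0]
      _ = Cardinal.aleph0 := Cardinal.aleph0_mul_aleph0

lemma card_rho (a : ℕ → ℕ) (L : ℕ) : (rho a L).card ≤ Cardinal.aleph0 := by
  induction L with
  | zero => simp [rho]
  | succ L ih =>
    rw [rho, Ordinal.card_add, Ordinal.card_mul]
    calc (ω ^ ((L:ℕ) : Ordinal.{0})).card * ((a L : ℕ) : Ordinal.{0}).card + (rho a L).card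
        ≤ Cardinal.aleph0 * Cardinal.aleph0 + Cardinal.aleph0 := by
          apply add_le_add _ ih
          apply mul_le_mul' (card_omega_pow L)
          rw [Ordinal.card_nat]
          exact (Cardinal.nat_lt_aleph0 _).le
      _ = Cardinal.aleph0 := by rw [Cardinal.aleph0_mul_aleph0, Cardinal.aleph0_add_aleph0]

end Stmt5Aux


/-- If an ultrafilter `U` admits an infinite strictly decreasing `<_∞`-sequence
`U = U₀ >_∞ U₁ >_∞ ⋯` below it, then there is `h : ω → ω₁` such that the order type
of `h '' X` is at least `ω ^ ω` for every `X ∈ U`. -/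
theorem stmt5 (U : Ultrafilter ℕ) (V : ℕ → Ultrafilter ℕ) (hV0 : V 0 = U)
    (hchain : ∀ i : ℕ, InfGT (V i) (V (i + 1))) :
    ∃ h : ℕ → Ordinal.{0}, (∀ n, h n < ω₁) ∧
      ∀ X ∈ U, ω ^ (ω : Ordinal.{1}) ≤ otype (h '' X) := by
  have hF : ∀ j, ∃ f : ℕ → ℕ, Ultrafilter.map f (V j) = V (j+1) ∧
      ∀ X ∈ V j, ¬FinToOneOn f X ∧ ¬ConstOn f X := hchain
  choose F hmap hprop using hF
  have hsing : ∀ j (x : ℕ), ({x} : Set ℕ) ∉ V j := by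
    intro j x hx
    exact (hprop j {x} hx).2 ⟨F j x, fun y hy => by rw [Set.mem_singleton_iff.1 hy]⟩
  have hnf : ∀ j X, X ∈ V j → ¬ FinToOneOn (F j) X := fun j X hX => (hprop j X hX).1
  have hD := Stmt5Aux.Dset_mem V F hmap hnf hsing
  have hmain := Stmt5Aux.main_induction V F hD
  refine ⟨Stmt5Aux.phi F 0, ?_, ?_⟩
  · intro n
    have hcard := Stmt5Aux.card_rho (Stmt5Aux.seq F 0 n) (n+1)
    have hrfl : Stmt5Aux.phi F 0 n = Stmt5Aux.rho (Stmt5Aux.seq F 0 n) (n+1) := rfl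
    rw [hrfl, ← Cardinal.ord_aleph 1]
    exact Cardinal.lt_ord.2 (lt_of_le_of_lt hcard Cardinal.aleph0_lt_aleph_one)
  · intro X hX
    rw [← hV0] at hX
    rw [opow_le_of_isSuccLimit omega0_ne_zero isSuccLimit_omega0]
    intro b hb
    obtain ⟨k, rfl⟩ := lt_omega0.1 hb
    exact hmain k 0 X hX
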